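/- Let $P$ be a polynomial on $\mathbb{C}^d$ of degree $k$ with homogeneous expansion $P = P_{\beta_1} + \cdots + P_{\beta_2} + P_k$ where $0\le\beta_1\le\beta_2\le k-1$, and let $\varphi = \sum_{m\ge 0}\varphi_m$ be a formal expansion into homogeneous polynomials. If $u := P\varphi$ satisfies $P_k^*(D) u = 0$, then for every $m\ge 0$, $\|P_k\varphi_m\|_a \le \sum_{j=1}^{k} \|P_{k-j}\varphi_{m+j}\|_a$, where $P_n := 0$ for $n \notin \{\beta_1,\dots,\beta_2,k\}$. -/

import Mathlib

open MvPolynomial Finset Filter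

/-- Multi-index factorial `α! = ∏ i (α i)!`. -/
noncomputable def mfact {d : ℕ} (α : Fin d →₀ ℕ) : ℕ := ∏ i, Nat.factorial (α i)

/-- The apolar inner product `⟨P,Q⟩_a = ∑ α α! c_α conj(d_α)`. -/
noncomputable def apolar {d : ℕ} (P Q : MvPolynomial (Fin d) ℂ) : ℂ :=
  ∑ α ∈ P.support ∪ Q.support, (mfact α : ℂ) * P.coeff α * (starRingEnd ℂ) (Q.coeff α)

/-- The apolar norm. -/
noncomputable def apolarNorm {d : ℕ} (P : MvPolynomial (Fin d) ℂ) : ℝ :=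
  Real.sqrt (apolar P P).re

/-- The polynomial with conjugated coefficients. -/
noncomputable def conjPoly {d : ℕ} (Q : MvPolynomial (Fin d) ℂ) : MvPolynomial (Fin d) ℂ :=
  Q.map (starRingEnd ℂ)

/-- Iterated partial derivative `∂^α` on polynomials. -/
noncomputable def pderivMulti {d : ℕ} (α : Fin d →₀ ℕ) (f : MvPolynomial (Fin d) ℂ) :
    MvPolynomial (Fin d) ℂ :=
  (List.finRange d).foldr (fun i g => (fun h => MvPolynomial.pderiv i h)^[α i] g) f

/-- The differential operator `Q(D)` acting on polynomials. -/
noncomputable def diffOpPoly {d : ℕ} (Q f : MvPolynomial (Fin d) ℂ) : MvPolynomial (Fin d) ℂ :=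
  ∑ α ∈ Q.support, Q.coeff α • pderivMulti α f

/-- Partial derivative in direction `i` of a function on `ℂ^d`. -/
noncomputable def pd {d : ℕ} (i : Fin d) (f : (Fin d → ℂ) → ℂ) : (Fin d → ℂ) → ℂ :=
  fun z => fderiv ℂ f z (Pi.single i 1)

/-- Iterated partial derivative `∂^α` of a function on `ℂ^d`. -/
noncomputable def pdMulti {d : ℕ} (α : Fin d →₀ ℕ) (f : (Fin d → ℂ) → ℂ) : (Fin d → ℂ) → ℂ :=
  (List.finRange d).foldr (fun i g => (pd i)^[α i] g) f

/-- The differential operator `Q(D)` acting on functions on `ℂ^d`. -/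
noncomputable def diffOpFun {d : ℕ} (Q : MvPolynomial (Fin d) ℂ) (f : (Fin d → ℂ) → ℂ) :
    (Fin d → ℂ) → ℂ :=
  fun z => ∑ α ∈ Q.support, Q.coeff α * pdMulti α f z

/-- Euclidean norm on `ℂ^d`. -/
noncomputable def enorm' {d : ℕ} (z : Fin d → ℂ) : ℝ :=
  Real.sqrt (∑ i, ‖z i‖ ^ 2)

/-- `M(f,r) = sup_{|z|=r} |f(z)|`. -/
noncomputable def maxMod {d : ℕ} (f : (Fin d → ℂ) → ℂ) (r : ℝ) : ℝ :=
  sSup ((fun z => ‖f z‖) '' {z | enorm' z = r})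

/-- The order of an entire function on `ℂ^d`. -/
noncomputable def funOrder {d : ℕ} (f : (Fin d → ℂ) → ℂ) : ℝ :=
  Filter.limsup (fun r => Real.log (Real.log (maxMod f r)) / Real.log r) Filter.atTop

/-- Sup of `|g|` over the unit sphere of `ℂ^d`. -/
noncomputable def sphereSup {d : ℕ} (g : MvPolynomial (Fin d) ℂ) : ℝ :=
  sSup ((fun θ => ‖MvPolynomial.eval θ g‖) '' {θ : Fin d → ℂ | enorm' θ = 1})

set_option linter.unnecessarySeqFocus false

variable {d : ℕ}



variable {d : ℕ}

lemma apolar_eq_sum (P Q : MvPolynomial (Fin d) ℂ) (s : Finset ((Fin d) →₀ ℕ))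
    (hs : P.support ∪ Q.support ⊆ s) :
    apolar P Q = ∑ α ∈ s, (mfact α : ℂ) * P.coeff α * (starRingEnd ℂ) (Q.coeff α) := by
  refine Finset.sum_subset hs ?_
  intro α _ hα
  simp only [Finset.mem_union, mem_support_iff, not_or, not_not] at hα
  simp [hα.1]

lemma apolar_add_left (P P' Q : MvPolynomial (Fin d) ℂ) :
    apolar (P + P') Q = apolar P Q + apolar P' Q := by
  rw [apolar_eq_sum (P+P') Q (P.support ∪ P'.support ∪ Q.support)
      (Finset.union_subset (le_trans (support_add) (by intro x; simp; tauto)) (by intro x; simp; tauto)),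
    apolar_eq_sum P Q (P.support ∪ P'.support ∪ Q.support) (by intro x; simp; tauto),
    apolar_eq_sum P' Q (P.support ∪ P'.support ∪ Q.support) (by intro x; simp; tauto),
    ← Finset.sum_add_distrib]
  refine Finset.sum_congr rfl fun α _ => ?_
  rw [coeff_add]; ring

lemma apolar_zero_left (Q : MvPolynomial (Fin d) ℂ) : apolar 0 Q = 0 := by
  simp [apolar]

lemma apolar_smul_left (c : ℂ) (P Q : MvPolynomial (Fin d) ℂ) :
    apolar (c • P) Q = c * apolar P Q := by
  rw [apolar_eq_sum (c • P) Q (P.support ∪ Q.support)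
      (Finset.union_subset (le_trans (support_smul) (by intro x; simp; tauto)) (by intro x; simp; tauto)),
    apolar, Finset.mul_sum]
  refine Finset.sum_congr rfl fun α _ => ?_
  rw [coeff_smul, smul_eq_mul]; ring

lemma apolar_conj_symm (P Q : MvPolynomial (Fin d) ℂ) :
    apolar Q P = (starRingEnd ℂ) (apolar P Q) := by
  rw [apolar, apolar, map_sum, Finset.union_comm]
  refine Finset.sum_congr rfl fun α _ => ?_
  simp only [map_mul, Complex.conj_conj, map_natCast]
  ring

lemma apolar_add_right (P Q Q' : MvPolynomial (Fin d) ℂ) :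
    apolar P (Q + Q') = apolar P Q + apolar P Q' := by
  rw [apolar_conj_symm, apolar_add_left, map_add, ← apolar_conj_symm, ← apolar_conj_symm]

lemma apolar_smul_right (c : ℂ) (P Q : MvPolynomial (Fin d) ℂ) :
    apolar P (c • Q) = (starRingEnd ℂ) c * apolar P Q := by
  rw [apolar_conj_symm, apolar_smul_left, map_mul, ← apolar_conj_symm]

lemma apolar_zero_right (P : MvPolynomial (Fin d) ℂ) : apolar P 0 = 0 := by
  simp [apolar]

lemma apolar_sum_left {ι : Type*} (t : Finset ι) (f : ι → MvPolynomial (Fin d) ℂ)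
    (Q : MvPolynomial (Fin d) ℂ) :
    apolar (∑ i ∈ t, f i) Q = ∑ i ∈ t, apolar (f i) Q := by
  induction t using Finset.cons_induction with
  | empty => simp [apolar_zero_left]
  | cons i t hi ih => rw [Finset.sum_cons, apolar_add_left, ih, Finset.sum_cons]

lemma apolar_sum_right {ι : Type*} (t : Finset ι) (P : MvPolynomial (Fin d) ℂ)
    (f : ι → MvPolynomial (Fin d) ℂ) :
    apolar P (∑ i ∈ t, f i) = ∑ i ∈ t, apolar P (f i) := by
  rw [apolar_conj_symm, apolar_sum_left, map_sum]
  exact Finset.sum_congr rfl fun i _ => (apolar_conj_symm _ _).symm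

lemma apolar_monomial (a b : Fin d →₀ ℕ) (c e : ℂ) :
    apolar (monomial a c) (monomial b e) =
      if a = b then (mfact a : ℂ) * c * (starRingEnd ℂ) e else 0 := by
  have h1 : (monomial a c).support ⊆ {a, b} := by
    rw [support_monomial]; split <;> simp
  have h2 : (monomial b e).support ⊆ {a, b} := by
    rw [support_monomial]; split <;> simp
  rw [apolar_eq_sum _ _ {a, b} (Finset.union_subset h1 h2)]
  by_cases hab : a = b
  · subst hab
    simp [coeff_monomial]
  · rw [Finset.sum_pair hab]
    simp [coeff_monomial, hab, Ne.symm hab]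
lemma mfact_sub_single (a : Fin d →₀ ℕ) (i : Fin d) (h : a i ≠ 0) :
    mfact (a - Finsupp.single i 1) * a i = mfact a := by
  unfold mfact
  rw [← Finset.prod_erase_mul Finset.univ _ (Finset.mem_univ i),
      ← Finset.prod_erase_mul Finset.univ (fun j => (a j).factorial) (Finset.mem_univ i)]
  have h1 : ∀ j ∈ Finset.univ.erase i,
      (((a - Finsupp.single i 1 : Fin d →₀ ℕ)) j).factorial = (a j).factorial := by
    intro j hj
    rw [Finsupp.tsub_apply, Finsupp.single_apply, if_neg (Ne.symm (Finset.mem_erase.mp hj).1)]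
    simp
  rw [Finset.prod_congr rfl h1, mul_assoc]
  congr 1
  rw [Finsupp.tsub_apply, Finsupp.single_apply, if_pos rfl, mul_comm]
  exact Nat.mul_factorial_pred h

lemma apolar_pderiv_monomial (i : Fin d) (a b : Fin d →₀ ℕ) (c e : ℂ) :
    apolar (pderiv i (monomial a c)) (monomial b e) =
      apolar (monomial a c) (X i * monomial b e) := by
  rw [pderiv_monomial, X, monomial_mul, one_mul, apolar_monomial, apolar_monomial]
  by_cases h : a i = 0
  · have h1 : a - Finsupp.single i 1 = a := by
      ext j
      rw [Finsupp.tsub_apply, Finsupp.single_apply]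
      rcases eq_or_ne i j with rfl | hij
      · simp [h]
      · simp [hij]
    have h2 : a ≠ Finsupp.single i 1 + b := by
      intro he
      have := congrArg (fun s : Fin d →₀ ℕ => s i) he
      simp [Finsupp.single_apply, h] at this
      omega
    rw [if_neg h2, h1]
    split
    · simp [h]
    · rfl
  · have hiff : (a - Finsupp.single i 1 = b) ↔ (a = Finsupp.single i 1 + b) := by
      rw [Finsupp.ext_iff, Finsupp.ext_iff]
      simp only [Finsupp.tsub_apply, Finsupp.add_apply, Finsupp.single_apply]
      constructor <;> intro H j <;> have HH := H j <;> rcases eq_or_ne i j with rfl | hij <;>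
        simp_all <;> omega
    by_cases hb : a - Finsupp.single i 1 = b
    · rw [if_pos hb, if_pos (hiff.mp hb), ← mfact_sub_single a i h]
      push_cast
      ring
    · rw [if_neg hb, if_neg (fun hh => hb (hiff.mpr hh))]

lemma apolar_pderiv (i : Fin d) (f g : MvPolynomial (Fin d) ℂ) :
    apolar (pderiv i f) g = apolar f (X i * g) := by
  conv_lhs => rw [f.as_sum, map_sum, g.as_sum]
  conv_rhs => rw [f.as_sum, g.as_sum]
  rw [apolar_sum_left, apolar_sum_left]
  refine Finset.sum_congr rfl fun a _ => ?_
  rw [apolar_sum_right, Finset.mul_sum, apolar_sum_right]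
  exact Finset.sum_congr rfl fun b _ => apolar_pderiv_monomial i a b _ _

lemma apolar_pderiv_iterate (i : Fin d) (n : ℕ) (f g : MvPolynomial (Fin d) ℂ) :
    apolar ((fun h => pderiv i h)^[n] f) g = apolar f (X i ^ n * g) := by
  induction n generalizing g with
  | zero => simp
  | succ n ih =>
    rw [Function.iterate_succ_apply', apolar_pderiv, ih]
    congr 1
    ring

lemma apolar_foldr (α : Fin d →₀ ℕ) (L : List (Fin d)) (f g : MvPolynomial (Fin d) ℂ) :
    apolar (L.foldr (fun i h => (fun h' => pderiv i h')^[α i] h) f) g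
      = apolar f ((L.map fun i => X i ^ α i).prod * g) := by
  induction L generalizing g with
  | nil => simp
  | cons i L ih =>
    rw [List.foldr_cons, apolar_pderiv_iterate, ih, List.map_cons, List.prod_cons]
    congr 1
    ring




lemma apolar_pderivMulti (α : Fin d →₀ ℕ) (f g : MvPolynomial (Fin d) ℂ) :
    apolar (pderivMulti α f) g = apolar f (monomial α 1 * g) := by
  rw [pderivMulti, apolar_foldr]
  congr 2
  rw [← Fin.prod_univ_def, monomial_eq, C_1, one_mul,
    Finsupp.prod_fintype _ _ (fun i => pow_zero _)]

lemma apolar_diffOp (Q f g : MvPolynomial (Fin d) ℂ) :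
    apolar (diffOpPoly (conjPoly Q) f) g = apolar f (Q * g) := by
  rw [diffOpPoly, apolar_sum_left]
  have hs : (conjPoly Q).support = Q.support :=
    MvPolynomial.support_map_of_injective _ (starRingEnd ℂ).injective
  conv_rhs => rw [Q.as_sum, Finset.sum_mul, apolar_sum_right]
  rw [hs]
  refine Finset.sum_congr rfl fun α hα => ?_
  rw [apolar_smul_left, apolar_pderivMulti]
  have h1 : (monomial α) (Q.coeff α) * g = (Q.coeff α) • ((monomial α 1) * g) := by
    rw [← smul_mul_assoc, smul_monomial, smul_eq_mul, mul_one]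
  rw [h1, apolar_smul_right]
  congr 1


lemma apolar_self_re (P : MvPolynomial (Fin d) ℂ) :
    (apolar P P).re = ∑ α ∈ P.support, (mfact α : ℝ) * ‖P.coeff α‖ ^ 2 := by
  rw [apolar, Finset.union_self, Complex.re_sum]
  refine Finset.sum_congr rfl fun α _ => ?_
  rw [mul_assoc, Complex.mul_conj, Complex.normSq_eq_norm_sq]
  norm_cast

lemma apolar_self_re_nonneg (P : MvPolynomial (Fin d) ℂ) : 0 ≤ (apolar P P).re := by
  rw [apolar_self_re]
  exact Finset.sum_nonneg fun α _ => by positivity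

lemma apolarNorm_nonneg (P : MvPolynomial (Fin d) ℂ) : 0 ≤ apolarNorm P :=
  Real.sqrt_nonneg _

lemma apolarNorm_sq (P : MvPolynomial (Fin d) ℂ) :
    apolarNorm P ^ 2 = (apolar P P).re :=
  Real.sq_sqrt (apolar_self_re_nonneg P)

lemma apolar_self_re_eq_sum (P : MvPolynomial (Fin d) ℂ) (s : Finset ((Fin d) →₀ ℕ))
    (hs : P.support ⊆ s) :
    (apolar P P).re = ∑ α ∈ s, (mfact α : ℝ) * ‖P.coeff α‖ ^ 2 := by
  rw [apolar_self_re]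
  refine Finset.sum_subset hs fun α _ hα => ?_
  rw [mem_support_iff, not_not] at hα
  simp [hα]

lemma abs_apolar_le (P Q : MvPolynomial (Fin d) ℂ) :
    ‖apolar P Q‖ ≤ apolarNorm P * apolarNorm Q := by
  classical
  set s := P.support ∪ Q.support with hs
  have h1 : ‖apolar P Q‖ ≤
      ∑ α ∈ s, (Real.sqrt (mfact α) * ‖P.coeff α‖) *
        (Real.sqrt (mfact α) * ‖Q.coeff α‖) := by
    refine le_trans (norm_sum_le _ _) (le_of_eq (Finset.sum_congr rfl fun α _ => ?_))
    rw [norm_mul, norm_mul, Complex.norm_natCast, Complex.norm_conj]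
    rw [show Real.sqrt (mfact α) * ‖P.coeff α‖ *
        (Real.sqrt (mfact α) * ‖Q.coeff α‖) =
        (Real.sqrt (mfact α) * Real.sqrt (mfact α)) *
          (‖P.coeff α‖ * ‖Q.coeff α‖) by ring,
      Real.mul_self_sqrt (Nat.cast_nonneg _)]
    ring
  refine le_trans h1 (le_trans (Real.sum_mul_le_sqrt_mul_sqrt s _ _) (le_of_eq ?_))
  have e1 : ∑ α ∈ s, (Real.sqrt (mfact α) * ‖P.coeff α‖) ^ 2
      = (apolar P P).re := by
    rw [apolar_self_re_eq_sum P s Finset.subset_union_left]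
    refine Finset.sum_congr rfl fun α _ => ?_
    rw [mul_pow, Real.sq_sqrt (Nat.cast_nonneg _)]
  have e2 : ∑ α ∈ s, (Real.sqrt (mfact α) * ‖Q.coeff α‖) ^ 2
      = (apolar Q Q).re := by
    rw [apolar_self_re_eq_sum Q s Finset.subset_union_right]
    refine Finset.sum_congr rfl fun α _ => ?_
    rw [mul_pow, Real.sq_sqrt (Nat.cast_nonneg _)]
  rw [e1, e2, apolarNorm, apolarNorm]


/-- If `u = Pφ` (as formal expansions into homogeneous parts) satisfies `P_k*(D)u = 0`, then
`‖P_k φ_m‖_a ≤ ∑_{j=1}^k ‖P_{k-j} φ_{m+j}‖_a` for every `m`. -/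
theorem stmt_9 {d : ℕ} (k β₁ β₂ : ℕ) (hβ : β₁ ≤ β₂) (hβ₂ : β₂ ≤ k - 1) (hk : 1 ≤ k)
    (Pn : ℕ → MvPolynomial (Fin d) ℂ) (hPn : ∀ n, (Pn n).IsHomogeneous n)
    (hPn0 : ∀ n, Pn n ≠ 0 → (β₁ ≤ n ∧ n ≤ β₂) ∨ n = k)
    (hPk : Pn k ≠ 0)
    (φm : ℕ → MvPolynomial (Fin d) ℂ) (hφm : ∀ m, (φm m).IsHomogeneous m)
    (u : ℕ → MvPolynomial (Fin d) ℂ)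
    (hu : ∀ m, u (m + k) = ∑ j ∈ Finset.range (k + 1), Pn (k - j) * φm (m + j))
    (hker : ∀ m, diffOpPoly (conjPoly (Pn k)) (u (m + k)) = 0) :
    ∀ m, apolarNorm (Pn k * φm m) ≤
      ∑ j ∈ Finset.Icc 1 k, apolarNorm (Pn (k - j) * φm (m + j)) := by
  intro m
  set v := Pn k * φm m with hv
  have hzero : apolar (u (m + k)) v = 0 := by
    have h := apolar_diffOp (Pn k) (u (m + k)) (φm m)
    rw [hker m, apolar_zero_left] at h
    exact h.symm
  have hsum : apolar v v = - ∑ j ∈ Finset.Icc 1 k, apolar (Pn (k - j) * φm (m + j)) v := by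
    rw [hu m, apolar_sum_left] at hzero
    have hr : Finset.range (k + 1) = insert 0 (Finset.Icc 1 k) := by
      ext x; simp; omega
    rw [hr, Finset.sum_insert (by simp)] at hzero
    simp only [Nat.sub_zero, Nat.add_zero, ← hv] at hzero
    linear_combination hzero
  have habs : (apolar v v).re ≤
      ∑ j ∈ Finset.Icc 1 k, apolarNorm (Pn (k - j) * φm (m + j)) * apolarNorm v := by
    calc (apolar v v).re ≤ ‖apolar v v‖ := Complex.re_le_norm _
    _ = ‖∑ j ∈ Finset.Icc 1 k, apolar (Pn (k - j) * φm (m + j)) v‖ := by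
        rw [hsum, norm_neg]
    _ ≤ ∑ j ∈ Finset.Icc 1 k, ‖apolar (Pn (k - j) * φm (m + j)) v‖ :=
        norm_sum_le _ _
    _ ≤ _ := Finset.sum_le_sum fun j _ => abs_apolar_le _ _
  rw [← apolarNorm_sq, ← Finset.sum_mul] at habs
  rcases eq_or_lt_of_le (apolarNorm_nonneg v) with h0 | h0
  · rw [← h0]
    exact Finset.sum_nonneg fun j _ => apolarNorm_nonneg _
  · nlinarith [habs]
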